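/- On any reflexive, transitive, strongly convergent frame with constant domain D and predicate P : D → W → Prop, the 'confidence' principle holds for the MS-true-belief operator: for every world w, either [tB^MS] holds at all R_B-successors of w, or ¬[tB^MS] holds at all R_B-successors of w. (That is, [B][tB^MS]^x φ ∨ [B]¬[tB^MS]^x φ is valid.) -/

import Mathlib

def RB {W : Type*} (R : W → W → Prop) (w u : W) : Prop := ∀ v, R w v → R v u

/-!
For `R` reflexive and transitive, the `R_B`-successors of a world form a cluster: any two of them
see each other via `R_B`, and `R_B` is transitive. Since `[tB^MS]` at `v` only looks at `v` and
its `R_B`-successors, it holds at one `R_B`-successor of `w` exactly when it holds at all of them.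
-/

/-- The formula `[tB^MS]` of the paper, evaluated at `v`. -/
def TBMS {W D : Type*} (R : W → W → Prop) (P : D → W → Prop) (v : W) : Prop :=
  ∃ a, (∀ u, RB R v u → P a u) ∧ P a v

section Cluster

variable {W : Type*} {R : W → W → Prop}
  (hrefl : ∀ w, R w w) (htrans : ∀ w v u, R w v → R v u → R w u)
include hrefl

theorem RB.rel {w v : W} (h : RB R w v) : R w v :=
  h w (hrefl w)

include htrans

theorem RB.trans {w v u : W} (hwv : RB R w v) (hvu : RB R v u) : RB R w u :=
  fun x hwx => htrans x v u (hwv x hwx) (RB.rel hrefl hvu)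

theorem RB.of_common_source {w v v' : W} (hv : RB R w v) (hv' : RB R w v') : RB R v v' :=
  fun x hvx => hv' x (htrans w v x (RB.rel hrefl hv) hvx)

theorem TBMS.of_common_source {D : Type*} {P : D → W → Prop} {w v v' : W}
    (hv : RB R w v) (hv' : RB R w v') (h : TBMS R P v) : TBMS R P v' := by
  obtain ⟨a, hBa, -⟩ := h
  have hvv' : RB R v v' := RB.of_common_source hrefl htrans hv hv'
  exact ⟨a, fun u hu => hBa u (RB.trans hrefl htrans hvv' hu), hBa v' hvv'⟩

end Cluster

theorem tBMS_confidence_general {W : Type*} {D : Type*}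
    (R : W → W → Prop) (P : D → W → Prop)
    (hrefl : ∀ w, R w w) (htrans : ∀ w v u, R w v → R v u → R w u) :
    ∀ w : W,
      (∀ v, RB R w v → ∃ a, (∀ u, RB R v u → P a u) ∧ P a v) ∨
      (∀ v, RB R w v → ¬ ∃ a, (∀ u, RB R v u → P a u) ∧ P a v) := by
  intro w
  by_cases h : ∃ v, RB R w v ∧ TBMS R P v
  · obtain ⟨v, hv, hvT⟩ := h
    exact Or.inl fun v' hv' => hvT.of_common_source hrefl htrans hv hv'
  · exact Or.inr fun v hv hvT => h ⟨v, hv, hvT⟩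

theorem tBMS_confidence {W : Type*} [Nonempty W] {D : Type*} [Nonempty D]
    (R : W → W → Prop) (P : D → W → Prop)
    (hrefl : ∀ w, R w w) (htrans : ∀ w v u, R w v → R v u → R w u)
    (hconv : ∀ w, ∃ u, ∀ v, R w v → R v u) :
    ∀ w : W,
      (∀ v, RB R w v → ∃ a, (∀ u, RB R v u → P a u) ∧ P a v) ∨
      (∀ v, RB R w v → ¬ ∃ a, (∀ u, RB R v u → P a u) ∧ P a v) :=
  tBMS_confidence_general R P hrefl htrans
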